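/- Let T be an n×L real matrix (cost matrix), λ > 0, and let c ∈ ℝ^n, r ∈ ℝ^L be strictly positive vectors with ∑_i c_i = ∑_j r_j = 1. Suppose Q* is a matrix with strictly positive entries satisfying Q* 1_L = c and (Q*)ᵀ 1_n = r, and suppose there exist vectors u ∈ ℝ^n, v ∈ ℝ^L such that Q*_{ij} = exp(-1/2 - λ u_i) · exp(-λ T_{ij}) · exp(-1/2 - λ v_j) for all i, j. Then Q* minimizes ⟨Q, T⟩ + (1/λ) ∑_{ij} Q_{ij} log Q_{ij} over all matrices Q with nonnegative entries satisfying Q 1_L = c and Qᵀ 1_n = r. -/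
import Mathlib


open Finset

/-- A matrix of the exponential (KKT stationarity) form that lies in the
transport polytope with marginals `c` and `r` minimizes the entropy-regularized
transport objective `⟨Q, T⟩ + (1/λ) ∑ Q log Q` over that polytope. -/
theorem entropic_ot_optimality (n L : ℕ) (T : Fin n → Fin L → ℝ) (lam : ℝ)
    (hlam : 0 < lam) (c : Fin n → ℝ) (r : Fin L → ℝ)
    (hc_pos : ∀ i, 0 < c i) (hr_pos : ∀ j, 0 < r j)
    (hc_sum : ∑ i, c i = 1) (hr_sum : ∑ j, r j = 1)
    (Qstar : Fin n → Fin L → ℝ) (hQstar_pos : ∀ i j, 0 < Qstar i j)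
    (hQstar_row : ∀ i, ∑ j, Qstar i j = c i)
    (hQstar_col : ∀ j, ∑ i, Qstar i j = r j)
    (u : Fin n → ℝ) (v : Fin L → ℝ)
    (hform : ∀ i j, Qstar i j =
      Real.exp (-1/2 - lam * u i) * Real.exp (-lam * T i j) *
        Real.exp (-1/2 - lam * v j)) :
    ∀ Q : Fin n → Fin L → ℝ, (∀ i j, 0 ≤ Q i j) →
      (∀ i, ∑ j, Q i j = c i) → (∀ j, ∑ i, Q i j = r j) →
      (∑ i, ∑ j, Qstar i j * T i j) +
          (1 / lam) * ∑ i, ∑ j, Qstar i j * Real.log (Qstar i j) ≤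
        (∑ i, ∑ j, Q i j * T i j) +
          (1 / lam) * ∑ i, ∑ j, Q i j * Real.log (Q i j) := by
  intro Q hQnn hQrow hQcol
  -- log of the optimal plan
  have hlog : ∀ i j, Real.log (Qstar i j) =
      (-1/2 - lam * u i) + (-lam * T i j) + (-1/2 - lam * v j) := by
    intro i j
    rw [hform i j, Real.log_mul (mul_pos (Real.exp_pos _) (Real.exp_pos _)).ne'
        (Real.exp_pos _).ne', Real.log_mul (Real.exp_pos _).ne' (Real.exp_pos _).ne',
      Real.log_exp, Real.log_exp, Real.log_exp]
  have hA : ∀ i j, T i j + (1/lam) * Real.log (Qstar i j) = -1/lam - u i - v j := by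
    intro i j
    rw [hlog]
    field_simp
    ring
  -- the linear functional ∑∑ P (−1/λ − u − v) is constant on the polytope
  have hsum : ∀ (P : Fin n → Fin L → ℝ), (∀ i, ∑ j, P i j = c i) →
      (∀ j, ∑ i, P i j = r j) →
      ∑ i, ∑ j, P i j * (-1/lam - u i - v j)
        = -1/lam - (∑ i, u i * c i) - (∑ j, v j * r j) := by
    intro P hrow hcol
    have hswap : ∑ j, v j * (∑ i, P i j) = ∑ i, ∑ j, v j * P i j := by
      simp_rw [Finset.mul_sum]
      exact Finset.sum_comm
    have e1 : ∑ i, ∑ j, P i j * (-1/lam - u i - v j)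
        = (-1/lam) * (∑ i, ∑ j, P i j) - (∑ i, u i * (∑ j, P i j))
          - (∑ j, v j * (∑ i, P i j)) := by
      rw [Finset.mul_sum, hswap]
      simp_rw [Finset.mul_sum]
      rw [← Finset.sum_sub_distrib, ← Finset.sum_sub_distrib]
      refine Finset.sum_congr rfl fun i _ => ?_
      rw [← Finset.sum_sub_distrib, ← Finset.sum_sub_distrib]
      exact Finset.sum_congr rfl fun j _ => by ring
    rw [e1]
    simp_rw [hrow, hcol, hc_sum]
    ring
  -- rewrite each objective via the potentials
  have obj : ∀ (P : Fin n → Fin L → ℝ),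
      (∑ i, ∑ j, P i j * T i j) + (1/lam) * ∑ i, ∑ j, P i j * Real.log (P i j)
      = (∑ i, ∑ j, P i j * (T i j + (1/lam) * Real.log (Qstar i j)))
        + (1/lam) * ∑ i, ∑ j, P i j * (Real.log (P i j) - Real.log (Qstar i j)) := by
    intro P
    rw [Finset.mul_sum, Finset.mul_sum, ← Finset.sum_add_distrib, ← Finset.sum_add_distrib]
    refine Finset.sum_congr rfl fun i _ => ?_
    rw [Finset.mul_sum, Finset.mul_sum, ← Finset.sum_add_distrib, ← Finset.sum_add_distrib]
    exact Finset.sum_congr rfl fun j _ => by ring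
  have hAconst : ∀ (P : Fin n → Fin L → ℝ), (∀ i, ∑ j, P i j = c i) →
      (∀ j, ∑ i, P i j = r j) →
      ∑ i, ∑ j, P i j * (T i j + (1/lam) * Real.log (Qstar i j))
        = -1/lam - (∑ i, u i * c i) - (∑ j, v j * r j) := by
    intro P hrow hcol
    rw [← hsum P hrow hcol]
    exact Finset.sum_congr rfl fun i _ => Finset.sum_congr rfl fun j _ => by rw [hA]
  rw [obj Qstar, obj Q, hAconst Qstar hQstar_row hQstar_col, hAconst Q hQrow hQcol]
  -- Gibbs inequality: the relative-entropy term for Q is ≥ 0, and is 0 for Q*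
  have hzero : ∑ i, ∑ j, Qstar i j * (Real.log (Qstar i j) - Real.log (Qstar i j)) = 0 := by
    simp
  rw [hzero, mul_zero, add_zero]
  have hpt : ∀ i j, Q i j - Qstar i j
      ≤ Q i j * (Real.log (Q i j) - Real.log (Qstar i j)) := by
    intro i j
    rcases eq_or_lt_of_le (hQnn i j) with h0 | hpos
    · rw [← h0]
      simp
      exact (hQstar_pos i j).le
    · have hx : Real.log (Qstar i j / Q i j) ≤ Qstar i j / Q i j - 1 :=
        Real.log_le_sub_one_of_pos (div_pos (hQstar_pos i j) hpos)
      rw [Real.log_div (hQstar_pos i j).ne' hpos.ne'] at hx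
      have := mul_le_mul_of_nonneg_left hx hpos.le
      rw [mul_sub, mul_sub, mul_div_cancel₀ _ hpos.ne', mul_one] at this
      nlinarith
  have hge : 0 ≤ ∑ i, ∑ j, Q i j * (Real.log (Q i j) - Real.log (Qstar i j)) := by
    have h1 : ∑ i, ∑ j, (Q i j - Qstar i j)
        ≤ ∑ i, ∑ j, Q i j * (Real.log (Q i j) - Real.log (Qstar i j)) :=
      Finset.sum_le_sum fun i _ => Finset.sum_le_sum fun j _ => hpt i j
    have h2 : ∑ i, ∑ j, (Q i j - Qstar i j) = 0 := by
      simp_rw [Finset.sum_sub_distrib, hQrow, hQstar_row]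
      simp
    linarith
  have hp : 0 ≤ (1/lam) * ∑ i, ∑ j, Q i j * (Real.log (Q i j) - Real.log (Qstar i j)) :=
    mul_nonneg (by positivity) hge
  linarith
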